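/- arXiv:1110.6084 — 3 statements merged into one kernel-verified Lean document; each statement's English description precedes it below -/
import Mathlib

section
/- Let $f^{(1)},\dots,f^{(K)} : [0,1]^d \to [0,1]$ be $(\beta,L)$-Hölder with pointwise max $f^\star$ and second pointwise max $f^\sharp$, and suppose the margin condition holds with parameter $\alpha$ satisfying $\alpha\beta > d$ (with respect to a marginal $P_X$ with density bounded below by $\underline{c} > 0$ on $[0,1]^d$). Then for every arm $i$, either $f^{(i)}(x) = f^\star(x)$ for almost every $x \in [0,1]^d$, or $\inf_{x}(f^\star(x) - f^{(i)}(x)) > 0$ on a set of full measure, i.e., each arm is either always optimal or its gap to $f^\star$ is bounded away from zero except on a null set. -/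
open MeasureTheory Metric

lemma coord_le_norm {d : ℕ} (v : EuclideanSpace ℝ (Fin d)) (j : Fin d) : |v j| ≤ ‖v‖ := by
  rw [EuclideanSpace.norm_eq]
  rw [show |v j| = Real.sqrt (‖v j‖^2) by rw [Real.sqrt_sq_eq_abs]; simp]
  apply Real.sqrt_le_sqrt
  exact Finset.single_le_sum (f := fun i => ‖v i‖^2) (fun i _ => sq_nonneg _) (Finset.mem_univ j)

lemma norm_le_of_coords {d : ℕ} (v : EuclideanSpace ℝ (Fin d)) (a : ℝ) (ha : 0 ≤ a)
    (h : ∀ j, |v j| ≤ a) : ‖v‖ ≤ a * Real.sqrt d := by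
  rw [EuclideanSpace.norm_eq]
  have hs : ∑ i : Fin d, ‖v i‖^2 ≤ d * a^2 := by
    calc ∑ i : Fin d, ‖v i‖^2 ≤ ∑ _i : Fin d, a^2 := by
          apply Finset.sum_le_sum; intro i _
          have := h i
          rw [Real.norm_eq_abs]
          nlinarith [abs_nonneg (v i)]
      _ = d * a^2 := by simp [mul_comm]
  calc Real.sqrt (∑ i : Fin d, ‖v i‖^2) ≤ Real.sqrt (d * a^2) := Real.sqrt_le_sqrt hs
    _ = a * Real.sqrt d := by
        rw [Real.sqrt_mul (by positivity), Real.sqrt_sq ha, mul_comm]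

lemma clamp_lemma (a ρ : ℝ) (h0 : 0 ≤ a) (h1 : a ≤ 1) (hρ : 0 < ρ) (hhalf : ρ ≤ 1 - ρ) :
    ρ ≤ min (max a ρ) (1-ρ) ∧ min (max a ρ) (1-ρ) ≤ 1-ρ ∧ |min (max a ρ) (1-ρ) - a| ≤ ρ := by
  refine ⟨le_min (le_max_right _ _) hhalf, min_le_right _ _, ?_⟩
  rw [abs_le]
  rcases le_total a ρ with h | h <;> rcases le_total a (1-ρ) with h' | h' <;>
    simp [min_def, max_def] <;> split_ifs <;> constructor <;> linarith

lemma holderContinuousOn {d : ℕ} {β L : ℝ} (hβ0 : 0 < β) (hL : 0 < L)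
    {s : Set (EuclideanSpace ℝ (Fin d))} {g : EuclideanSpace ℝ (Fin d) → ℝ}
    (h : ∀ x ∈ s, ∀ y ∈ s, |g x - g y| ≤ L * ‖x - y‖ ^ β) : ContinuousOn g s := by
  rw [Metric.continuousOn_iff]
  intro x hx ε hε
  refine ⟨(ε/(2*L))^(1/β), Real.rpow_pos_of_pos (by positivity) _, fun y hy hxy => ?_⟩
  have h1 : ‖y - x‖^β ≤ ε/(2*L) := by
    calc ‖y-x‖^β ≤ ((ε/(2*L))^(1/β))^β :=
          Real.rpow_le_rpow (norm_nonneg _)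
            (by rw [dist_eq_norm] at hxy; exact hxy.le) hβ0.le
      _ = ε/(2*L) := by
          rw [← Real.rpow_mul (by positivity), one_div_mul_cancel hβ0.ne', Real.rpow_one]
  have h2 := h y hy x hx
  rw [Real.dist_eq]
  calc |g y - g x| ≤ L * ‖y-x‖^β := h2
    _ ≤ L * (ε/(2*L)) := by nlinarith
    _ = ε/2 := by field_simp
    _ < ε := by linarith

open MeasureTheory
open scoped Classical
def unitCube (d : ℕ) : Set (EuclideanSpace ℝ (Fin d)) :=
  {x | ∀ j, x j ∈ Set.Icc (0 : ℝ) 1}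

set_option maxHeartbeats 2000000 in
open Metric in
/-- Under the `(β,L)`-smoothness condition and the margin condition with parameter `α`
satisfying `αβ > d` (w.r.t. a marginal `P_X` with density bounded below on `[0,1]^d`),
each arm is either optimal almost everywhere, or its gap to `f⋆` is bounded away
from zero outside a null set. -/
theorem stmt_8 (d K : ℕ) (hd : 1 ≤ d) (hK : 1 ≤ K)
    (β L α δ₀ C₀ : ℝ) (hβ0 : 0 < β) (hβ1 : β ≤ 1) (hL : 0 < L)
    (hα : 0 < α) (hαβ : α * β > d) (hδ₀ : δ₀ ∈ Set.Ioo (0 : ℝ) 1) (hC₀ : 0 < C₀)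
    (f : Fin K → EuclideanSpace ℝ (Fin d) → ℝ)
    (hrange : ∀ i, ∀ x ∈ unitCube d, f i x ∈ Set.Icc (0 : ℝ) 1)
    (hholder : ∀ i, ∀ x ∈ unitCube d, ∀ x' ∈ unitCube d,
      |f i x - f i x'| ≤ L * ‖x - x'‖ ^ β)
    (fstar fsharp : EuclideanSpace ℝ (Fin d) → ℝ)
    (hfstar : ∀ x, fstar x = ⨆ i, f i x)
    (hfsharp : ∀ x, fsharp x =
      if ∃ i, f i x < fstar x then sSup {v | ∃ i, v = f i x ∧ f i x < fstar x}
      else fstar x)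
    (μ : Measure (EuclideanSpace ℝ (Fin d))) [IsProbabilityMeasure μ]
    (c : ℝ) (hc : 0 < c)
    (hμsupp : μ (unitCube d) = 1)
    (hdens : ∀ s : Set (EuclideanSpace ℝ (Fin d)), MeasurableSet s →
      ENNReal.ofReal c * volume (s ∩ unitCube d) ≤ μ s)
    (hmargin : ∀ δ : ℝ, δ ∈ Set.Icc (0 : ℝ) δ₀ →
      μ {x | 0 < fstar x - fsharp x ∧ fstar x - fsharp x ≤ δ} ≤
        ENNReal.ofReal (C₀ * δ ^ α)) :
    ∀ i : Fin K,
      (∀ᵐ x ∂μ, f i x = fstar x) ∨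
      (∃ ε > (0 : ℝ), ∀ᵐ x ∂μ, fstar x - f i x ≥ ε) := by
  have hKne : Nonempty (Fin K) := ⟨⟨0, hK⟩⟩
  -- basic facts about fstar
  have hbdd : ∀ x, BddAbove (Set.range fun j => f j x) :=
    fun x => (Set.finite_range _).bddAbove
  have hle : ∀ (j) (x), f j x ≤ fstar x := by
    intro j x; rw [hfstar]; exact le_ciSup (hbdd x) j
  have hexmax : ∀ x, ∃ j, f j x = fstar x := by
    intro x
    obtain ⟨j, hj⟩ := Finite.exists_max (fun j => f j x)
    exact ⟨j, le_antisymm (hle j x) (by rw [hfstar]; exact ciSup_le hj)⟩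
  -- basic facts about fsharp
  have hSfin : ∀ x, {v | ∃ i, v = f i x ∧ f i x < fstar x}.Finite := by
    intro x
    have : {v | ∃ i, v = f i x ∧ f i x < fstar x} ⊆ Set.range (fun j => f j x) := by
      rintro v ⟨i, rfl, -⟩; exact ⟨i, rfl⟩
    exact (Set.finite_range _).subset this
  have hsharp_mem : ∀ x, (∃ i, f i x < fstar x) →
      ∃ j, f j x = fsharp x ∧ f j x < fstar x := by
    intro x hx
    rw [hfsharp, if_pos hx]
    obtain ⟨i₀, hi₀⟩ := hx
    have hne : {v | ∃ i, v = f i x ∧ f i x < fstar x}.Nonempty := ⟨f i₀ x, i₀, rfl, hi₀⟩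
    obtain ⟨j, hj1, hj2⟩ := hne.csSup_mem (hSfin x)
    exact ⟨j, hj1.symm, hj2⟩
  have hsharp_lt : ∀ x, (∃ i, f i x < fstar x) → fsharp x < fstar x := by
    intro x hx
    obtain ⟨j, hj1, hj2⟩ := hsharp_mem x hx
    rw [← hj1]; exact hj2
  have hsharp_ge : ∀ (x) (j), f j x < fstar x → f j x ≤ fsharp x := by
    intro x j hj
    rw [hfsharp, if_pos ⟨j, hj⟩]
    exact le_csSup (hSfin x).bddAbove ⟨j, rfl, hj⟩
  have hsharp_le : ∀ x, fsharp x ≤ fstar x := by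
    intro x
    by_cases hx : ∃ i, f i x < fstar x
    · exact (hsharp_lt x hx).le
    · rw [hfsharp, if_neg hx]
  -- Hölder for fstar
  have hstar_holder : ∀ x ∈ unitCube d, ∀ y ∈ unitCube d,
      |fstar x - fstar y| ≤ L * ‖x - y‖ ^ β := by
    intro x hx y hy
    rw [abs_le]
    constructor
    · obtain ⟨j, hj⟩ := hexmax y
      have h1 := hholder j x hx y hy
      have h2 := hle j x
      rw [abs_le] at h1
      linarith [h1.1, h1.2]
    · obtain ⟨j, hj⟩ := hexmax x
      have h1 := hholder j x hx y hy
      have h2 := hle j y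
      rw [abs_le] at h1
      linarith [h1.1, h1.2]
  -- cube facts
  have hcube_closed : IsClosed (unitCube d) := by
    have : unitCube d = (fun x : EuclideanSpace ℝ (Fin d) => (WithLp.ofLp x : Fin d → ℝ)) ⁻¹' Set.pi Set.univ (fun _ : Fin d => Set.Icc (0:ℝ) 1) := by
      ext x; exact ⟨fun h j _ => h j, fun h j => h j (Set.mem_univ j)⟩
    rw [this]
    exact (isClosed_set_pi (fun j _ => isClosed_Icc)).preimage (PiLp.continuous_ofLp 2 _)
  have hcube_meas : MeasurableSet (unitCube d) := hcube_closed.measurableSet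
  have hnullc : μ (unitCube d)ᶜ = 0 := by
    have := measure_compl hcube_meas (measure_ne_top μ _)
    rw [hμsupp, measure_univ] at this
    simpa using this
  have hae : ∀ {p : EuclideanSpace ℝ (Fin d) → Prop},
      (∀ x ∈ unitCube d, p x) → ∀ᵐ x ∂μ, p x := by
    intro p hp
    rw [ae_iff]
    refine measure_mono_null ?_ hnullc
    intro x hx
    simp only [Set.mem_setOf_eq] at hx
    intro hxc
    exact hx (hp x hxc)
  have hconv : Convex ℝ (unitCube d) := by
    intro x hx y hy a b ha hb hab j
    have h1 := hx j
    have h2 := hy j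
    simp only [Set.mem_Icc] at h1 h2 ⊢
    have : (a • x + b • y) j = a * x j + b * y j := by
      simp [PiLp.add_apply, PiLp.smul_apply, smul_eq_mul]
    rw [this]
    constructor <;> nlinarith
  -- key dichotomy for the gap fstar - fsharp
  have key : ∃ δ₁ > (0:ℝ), ∀ x ∈ unitCube d,
      fstar x - fsharp x = 0 ∨ fstar x - fsharp x > δ₁ := by
    set V : ℝ := (volume (Metric.ball (0 : EuclideanSpace ℝ (Fin d)) 1)).toReal with hVdef
    have hVpos : 0 < V := ENNReal.toReal_pos (measure_ball_pos volume _ one_pos).ne'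
      measure_ball_lt_top.ne
    set A : ℝ := c * V / ((4*L)^((d:ℝ)/β) * ((d:ℝ)+1)^d) with hAdef
    have hApos : 0 < A := by
      rw [hAdef]; positivity
    set B : ℝ := C₀ * (3/2:ℝ)^α with hBdef
    have hBpos : 0 < B := by rw [hBdef]; positivity
    set γ : ℝ := α - (d:ℝ)/β with hγdef
    have hγ : 0 < γ := by
      rw [hγdef]
      have : (d:ℝ)/β < α := (div_lt_iff₀ hβ0).mpr (by linarith)
      linarith
    refine ⟨min (min (2*δ₀/3) (4*L)) (min 1 ((A/(2*B))^((1:ℝ)/γ))), ?_, ?_⟩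
    · exact lt_min (lt_min (by linarith [hδ₀.1]) (by linarith))
        (lt_min one_pos (Real.rpow_pos_of_pos (by positivity) _))
    intro x₀ hx₀
    by_contra hcon
    push_neg at hcon
    set t : ℝ := fstar x₀ - fsharp x₀ with ht
    have ht0 : 0 < t := lt_of_le_of_ne (by rw [ht]; linarith [hsharp_le x₀]) (Ne.symm hcon.1)
    have htm := hcon.2
    have ht1 : t ≤ 2*δ₀/3 := htm.trans ((min_le_left _ _).trans (min_le_left _ _))
    have ht2 : t ≤ 4*L := htm.trans ((min_le_left _ _).trans (min_le_right _ _))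
    have ht4 : t ≤ (A/(2*B))^((1:ℝ)/γ) := htm.trans ((min_le_right _ _).trans (min_le_right _ _))
    set r : ℝ := (t/(4*L))^((1:ℝ)/β) with hrdef
    have hr0 : 0 < r := Real.rpow_pos_of_pos (by positivity) _
    have hrβ : r ^ β = t/(4*L) := by
      rw [hrdef, ← Real.rpow_mul (by positivity : (0:ℝ) ≤ t/(4*L)),
        one_div_mul_cancel hβ0.ne', Real.rpow_one]
    have hr1 : r ≤ 1 := by
      rw [hrdef]
      exact Real.rpow_le_one (by positivity) (by rw [div_le_one (by positivity)]; linarith)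
        (by positivity)
    have hLr : L * r ^ β = t/4 := by rw [hrβ]; field_simp
    have hcond : ∃ k, f k x₀ < fstar x₀ := by
      by_contra hno
      have h9 := hfsharp x₀
      rw [if_neg hno] at h9
      rw [ht, h9] at ht0
      linarith
    obtain ⟨j₀, hj₀eq, hj₀lt⟩ := hsharp_mem x₀ hcond
    have hnbhd : ∀ x ∈ unitCube d, ‖x - x₀‖ ≤ r →
        0 < fstar x - fsharp x ∧ fstar x - fsharp x ≤ 3*t/2 := by
      intro x hx hxr
      have hH : ∀ k, |f k x - f k x₀| ≤ t/4 := by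
        intro k
        refine (hholder k x hx x₀ hx₀).trans ?_
        calc L * ‖x - x₀‖^β ≤ L * r^β :=
              mul_le_mul_of_nonneg_left (Real.rpow_le_rpow (norm_nonneg _) hxr hβ0.le) hL.le
          _ = t/4 := hLr
      obtain ⟨j₁, hj₁⟩ := hexmax x₀
      obtain ⟨j₂, hj₂⟩ := hexmax x
      have ha := abs_le.mp (hH j₀)
      have hb := abs_le.mp (hH j₁)
      have hcd := abs_le.mp (hH j₂)
      have hstar_lb : fstar x₀ - t/4 ≤ fstar x := by
        have := hle j₁ x; linarith
      have hstar_ub : fstar x ≤ fstar x₀ + t/4 := by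
        have := hle j₂ x₀; linarith
      have hj₀x : f j₀ x < fstar x := by
        have h5 : f j₀ x ≤ f j₀ x₀ + t/4 := by linarith
        rw [hj₀eq] at h5
        have h6 : fsharp x₀ = fstar x₀ - t := by rw [ht]; ring
        rw [h6] at h5
        linarith
      constructor
      · have := hsharp_lt x ⟨j₀, hj₀x⟩; linarith
      · have h5 := hsharp_ge x j₀ hj₀x
        have h6 : f j₀ x₀ - t/4 ≤ f j₀ x := by linarith
        rw [hj₀eq] at h6
        have h7 : fsharp x₀ = fstar x₀ - t := by rw [ht]; ring
        rw [h7] at h6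
        linarith
    set ρ : ℝ := r / ((d:ℝ)+1) with hρdef
    have hρ0 : 0 < ρ := by rw [hρdef]; positivity
    have hd1 : (1:ℝ) ≤ (d:ℝ) := by exact_mod_cast hd
    have hρhalf : ρ ≤ 1 - ρ := by
      have h5 : ρ ≤ 1/2 := by
        rw [hρdef, div_le_iff₀ (by positivity)]
        nlinarith
      linarith
    set y : EuclideanSpace ℝ (Fin d) := WithLp.toLp 2 (fun j => min (max (x₀ j) ρ) (1-ρ)) with hy
    have hyfacts : ∀ j, ρ ≤ y j ∧ y j ≤ 1-ρ ∧ |y j - x₀ j| ≤ ρ := by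
      intro j
      have h01 := hx₀ j
      have hyj : y j = min (max (x₀ j) ρ) (1-ρ) := by rw [hy]
      rw [hyj]
      exact clamp_lemma (x₀ j) ρ h01.1 h01.2 hρ0 hρhalf
    have hyball_cube : Metric.closedBall y ρ ⊆ unitCube d := by
      intro z hz j
      rw [Metric.mem_closedBall, dist_eq_norm] at hz
      have h2 : |(z - y) j| ≤ ‖z - y‖ := coord_le_norm (z - y) j
      have h3 : (z - y) j = z j - y j := by simp
      rw [h3] at h2
      obtain ⟨hy1, hy2, -⟩ := hyfacts j
      rw [abs_le] at h2
      exact ⟨by linarith [h2.1], by linarith [h2.2]⟩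
    have hyx₀ : ‖y - x₀‖ ≤ ρ * Real.sqrt d := by
      apply norm_le_of_coords _ _ hρ0.le
      intro j
      have h3 : (y - x₀) j = y j - x₀ j := by simp
      rw [h3]
      exact (hyfacts j).2.2
    have hsqd : Real.sqrt d ≤ (d:ℝ) := by
      calc Real.sqrt d ≤ Real.sqrt ((d:ℝ)^2) := Real.sqrt_le_sqrt (by nlinarith)
        _ = d := Real.sqrt_sq (by positivity)
    have hball2 : Metric.closedBall y ρ ⊆ Metric.closedBall x₀ r := by
      intro z hz
      rw [Metric.mem_closedBall, dist_eq_norm] at hz ⊢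
      have hsq0 : 0 ≤ Real.sqrt d := Real.sqrt_nonneg _
      calc ‖z - x₀‖ = ‖(z - y) + (y - x₀)‖ := by rw [sub_add_sub_cancel]
        _ ≤ ‖z - y‖ + ‖y - x₀‖ := norm_add_le _ _
        _ ≤ ρ + ρ * Real.sqrt d := add_le_add hz hyx₀
        _ ≤ ρ * (1 + d) := by nlinarith
        _ = r := by
            rw [hρdef, show (1:ℝ)+(d:ℝ) = (d:ℝ)+1 from by ring]
            exact div_mul_cancel₀ r (by positivity)
    have hsub : Metric.closedBall y ρ ⊆
        {x | 0 < fstar x - fsharp x ∧ fstar x - fsharp x ≤ 3*t/2} := by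
      intro z hz
      have h1 := hball2 hz
      rw [Metric.mem_closedBall, dist_eq_norm] at h1
      exact hnbhd z (hyball_cube hz) h1
    have h1 : ENNReal.ofReal c * volume (Metric.closedBall y ρ) ≤ μ (Metric.closedBall y ρ) := by
      have := hdens (Metric.closedBall y ρ) measurableSet_closedBall
      rwa [Set.inter_eq_left.mpr hyball_cube] at this
    have h2 : volume (Metric.closedBall y ρ) =
        ENNReal.ofReal (ρ^d) * volume (Metric.ball (0:EuclideanSpace ℝ (Fin d)) 1) := by
      rw [Measure.addHaar_closedBall volume y hρ0.le, finrank_euclideanSpace_fin]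
    have h3 : μ (Metric.closedBall y ρ) ≤ ENNReal.ofReal (C₀ * (3*t/2)^α) :=
      (measure_mono hsub).trans (hmargin (3*t/2) ⟨by positivity, by linarith⟩)
    have hVeq : volume (Metric.ball (0:EuclideanSpace ℝ (Fin d)) 1) = ENNReal.ofReal V :=
      (ENNReal.ofReal_toReal measure_ball_lt_top.ne).symm
    have hchain : ENNReal.ofReal (c * (ρ^d * V)) ≤ ENNReal.ofReal (C₀ * (3*t/2)^α) := by
      calc ENNReal.ofReal (c * (ρ^d * V))
          = ENNReal.ofReal c * (ENNReal.ofReal (ρ^d) * ENNReal.ofReal V) := by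
            rw [ENNReal.ofReal_mul hc.le, ENNReal.ofReal_mul (by positivity)]
        _ = ENNReal.ofReal c * volume (Metric.closedBall y ρ) := by rw [h2, hVeq]
        _ ≤ μ (Metric.closedBall y ρ) := h1
        _ ≤ _ := h3
    have hreal : c * (ρ^d * V) ≤ C₀ * (3*t/2)^α := by
      rwa [ENNReal.ofReal_le_ofReal_iff (by positivity)] at hchain
    have hρd : ρ^d = t^((d:ℝ)/β) / ((4*L)^((d:ℝ)/β) * ((d:ℝ)+1)^d) := by
      rw [hρdef, div_pow, hrdef, ← Real.rpow_natCast ((t/(4*L))^((1:ℝ)/β)) d,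
          ← Real.rpow_mul (by positivity : (0:ℝ) ≤ t/(4*L)),
          show (1:ℝ)/β*(d:ℕ) = (d:ℝ)/β by push_cast; ring,
          Real.div_rpow ht0.le (by positivity), div_div]
    have e2 : (3*t/2)^α = (3/2:ℝ)^α * t^α := by
      rw [show 3*t/2 = (3/2)*t by ring, Real.mul_rpow (by norm_num) ht0.le]
    have e3 : t^α = t^((d:ℝ)/β) * t^γ := by
      rw [← Real.rpow_add ht0]
      congr 1
      rw [hγdef]; ring
    have hP : 0 < t^((d:ℝ)/β) := Real.rpow_pos_of_pos ht0 _
    have hAB : A ≤ B * t^γ := by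
      rw [hρd, e2, e3] at hreal
      rw [hAdef, hBdef]
      have h7 : (c*V/((4*L)^((d:ℝ)/β) * ((d:ℝ)+1)^d)) * t^((d:ℝ)/β) ≤
          (C₀*(3/2:ℝ)^α*t^γ) * t^((d:ℝ)/β) := by
        calc (c*V/((4*L)^((d:ℝ)/β) * ((d:ℝ)+1)^d)) * t^((d:ℝ)/β)
            = c * (t^((d:ℝ)/β) / ((4*L)^((d:ℝ)/β) * ((d:ℝ)+1)^d) * V) := by ring
          _ ≤ C₀ * ((3/2:ℝ)^α * (t^((d:ℝ)/β) * t^γ)) := hreal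
          _ = (C₀*(3/2:ℝ)^α*t^γ) * t^((d:ℝ)/β) := by ring
      exact le_of_mul_le_mul_right h7 hP
    have htγ : t^γ ≤ A/(2*B) := by
      calc t^γ ≤ ((A/(2*B))^((1:ℝ)/γ))^γ := Real.rpow_le_rpow ht0.le ht4 hγ.le
        _ = A/(2*B) := by
            rw [← Real.rpow_mul (by positivity), one_div_mul_cancel hγ.ne', Real.rpow_one]
    have hfin : A ≤ A/2 := by
      calc A ≤ B * t^γ := hAB
        _ ≤ B * (A/(2*B)) := by nlinarith [hBpos]
        _ = A/2 := by field_simp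
    linarith
  obtain ⟨δ₁, hδ₁, hkey⟩ := key
  intro i
  -- dichotomy for arm i
  have harm : ∀ x ∈ unitCube d, fstar x - f i x = 0 ∨ fstar x - f i x > δ₁ := by
    intro x hx
    rcases eq_or_lt_of_le (hle i x) with h | h
    · left; rw [h]; ring
    · right
      have h1 := hsharp_ge x i h
      have h2 := hsharp_lt x ⟨i, h⟩
      rcases hkey x hx with h3 | h3
      · linarith
      · linarith
  by_cases hca : ∀ x ∈ unitCube d, f i x = fstar x
  · exact Or.inl (hae hca)
  · right
    push_neg at hca
    obtain ⟨x₂, hx₂, hx₂ne⟩ := hca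
    have hx₂gap : fstar x₂ - f i x₂ > δ₁ := by
      rcases harm x₂ hx₂ with h | h
      · exact absurd (by linarith : f i x₂ = fstar x₂) hx₂ne
      · exact h
    refine ⟨δ₁, hδ₁, hae ?_⟩
    intro x₁ hx₁
    by_contra hcon
    push_neg at hcon
    have hz : fstar x₁ - f i x₁ = 0 := by
      rcases harm x₁ hx₁ with h | h
      · exact h
      · linarith
    have hcont : ContinuousOn (fun x => fstar x - f i x) (unitCube d) := by
      apply holderContinuousOn (show (0:ℝ) < β from hβ0) (show (0:ℝ) < 2*L by linarith)
      intro x hx y hy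
      have h1 := hstar_holder x hx y hy
      have h2 := hholder i x hx y hy
      rw [abs_le] at h1 h2 ⊢
      constructor <;> · push_cast; nlinarith [Real.rpow_nonneg (norm_nonneg (x-y)) β]
    have hIVT := hconv.isPreconnected.intermediate_value hx₁ hx₂ hcont
    have hmem : δ₁ ∈ Set.Icc (fstar x₁ - f i x₁) (fstar x₂ - f i x₂) := by
      rw [hz]; exact ⟨hδ₁.le, hx₂gap.le⟩
    obtain ⟨x, hxs, hxeq⟩ := hIVT hmem
    have hxeq' : fstar x - f i x = δ₁ := hxeq
    rcases harm x hxs with h | h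
    · rw [hxeq'] at h; exact absurd h hδ₁.ne'
    · rw [hxeq'] at h; exact lt_irrefl _ h
end

section
/- Let $f^{(1)},\ldots,f^{(K)} : [0,1]^d \to [0,1]$ be $(\beta,L)$-Hölder, $f^\star = \max_i f^{(i)}$, and $f^\sharp$ the second pointwise maximum (equal to $f^\star$ where all maximizers coincide). Let $B$ be a cube of side $1/M$, $c_1 = 2Ld^{\beta/2}+1$, and $x_0 \in B$ with $f^\star(x_0) - f^\sharp(x_0) > c_1M^{-\beta}$. If arm $i$ satisfies $f^{(i)}(x_0) = f^\star(x_0)$, then for every $x \in B$, either $f^{(i)}(x) = f^\star(x)$ or $0 < f^\star(x) - f^{(i)}(x) \le c_1 M^{-\beta}$; consequently $f^\star(x) - f^{(i)}(x) \le c_1M^{-\beta}\,\mathbf{1}\{0 < f^\star(x) - f^\sharp(x) \le c_1M^{-\beta}\}$ for all $x \in B$. -/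
open scoped Classical

/-- An axis-aligned cube of side `1/M` with lower corner `y`. -/
def sideCube (d M : ℕ) (y : EuclideanSpace ℝ (Fin d)) : Set (EuclideanSpace ℝ (Fin d)) :=
  {x | ∀ j, y j ≤ x j ∧ x j ≤ y j + 1 / M}

/-- If `x₀` in a cube `B` of side `1/M` satisfies `f⋆(x₀) - f♯(x₀) > c₁ M^{-β}` and arm `i`
is optimal at `x₀`, then for every `x ∈ B` either `f⁽ⁱ⁾(x) = f⋆(x)` or
`0 < f⋆(x) - f⁽ⁱ⁾(x) ≤ c₁ M^{-β}`; consequently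
`f⋆(x) - f⁽ⁱ⁾(x) ≤ c₁ M^{-β} 𝟙{0 < f⋆(x) - f♯(x) ≤ c₁ M^{-β}}` on `B`. -/
theorem stmt_15 (d K M : ℕ) (hd : 1 ≤ d) (hK : 1 ≤ K) (hM : 1 ≤ M)
    (β L : ℝ) (hβ0 : 0 < β) (hβ1 : β ≤ 1) (hL : 0 < L)
    (f : Fin K → EuclideanSpace ℝ (Fin d) → ℝ)
    (hrange : ∀ i, ∀ x ∈ unitCube d, f i x ∈ Set.Icc (0 : ℝ) 1)
    (hholder : ∀ i, ∀ x ∈ unitCube d, ∀ x' ∈ unitCube d,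
      |f i x - f i x'| ≤ L * ‖x - x'‖ ^ β)
    (fstar fsharp : EuclideanSpace ℝ (Fin d) → ℝ)
    (hfstar : ∀ x, fstar x = ⨆ i, f i x)
    (hfsharp : ∀ x, fsharp x =
      if ∃ i, f i x < fstar x then sSup {v | ∃ i, v = f i x ∧ f i x < fstar x}
      else fstar x)
    (y : EuclideanSpace ℝ (Fin d)) (hBsub : sideCube d M y ⊆ unitCube d)
    (c₁ : ℝ) (hc₁ : c₁ = 2 * L * (d : ℝ) ^ (β / 2) + 1)
    (x₀ : EuclideanSpace ℝ (Fin d)) (hx₀ : x₀ ∈ sideCube d M y)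
    (hgap : fstar x₀ - fsharp x₀ > c₁ * (M : ℝ) ^ (-β))
    (i : Fin K) (hopt : f i x₀ = fstar x₀) :
    ∀ x ∈ sideCube d M y,
      (f i x = fstar x ∨
        (0 < fstar x - f i x ∧ fstar x - f i x ≤ c₁ * (M : ℝ) ^ (-β))) ∧
      fstar x - f i x ≤ c₁ * (M : ℝ) ^ (-β) *
        (if 0 < fstar x - fsharp x ∧ fstar x - fsharp x ≤ c₁ * (M : ℝ) ^ (-β)
          then (1 : ℝ) else 0) := by
  intro x hx
  have hxU := hBsub hx
  have hx0U := hBsub hx₀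
  have hMpos : (0:ℝ) < M := by exact_mod_cast hM
  have hMneg : (0:ℝ) < (M:ℝ) ^ (-β) := Real.rpow_pos_of_pos hMpos _
  have hne : Nonempty (Fin K) := ⟨⟨0, hK⟩⟩
  have hbdd : ∀ z, BddAbove (Set.range fun j => f j z) :=
    fun z => Set.Finite.bddAbove (Set.finite_range _)
  have hle : ∀ j z, f j z ≤ fstar z := by
    intro j z
    rw [hfstar]
    exact le_ciSup (hbdd z) j
  -- norm bound
  have hnorm : ‖x - x₀‖ ≤ Real.sqrt d / M := by
    rw [EuclideanSpace.norm_eq]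
    have hsum : (∑ j, ‖(x - x₀) j‖ ^ 2) ≤ (Real.sqrt d / M) ^ 2 := by
      have hco : ∀ j, ‖(x - x₀) j‖ ^ 2 ≤ (1 / (M:ℝ)) ^ 2 := by
        intro j
        have h1 := (hx j).1
        have h2 := (hx j).2
        have h3 := (hx₀ j).1
        have h4 := (hx₀ j).2
        have : ‖(x - x₀) j‖ ≤ 1 / (M:ℝ) := by
          have : (x - x₀) j = x j - x₀ j := rfl
          rw [this, Real.norm_eq_abs, abs_le]
          constructor <;> linarith
        have hnn : (0:ℝ) ≤ ‖(x - x₀) j‖ := norm_nonneg _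
        nlinarith
      calc (∑ j, ‖(x - x₀) j‖ ^ 2) ≤ ∑ _j : Fin d, (1 / (M:ℝ)) ^ 2 :=
            Finset.sum_le_sum fun j _ => hco j
        _ = d * (1 / (M:ℝ)) ^ 2 := by simp [mul_comm]
        _ = (Real.sqrt d / M) ^ 2 := by
            rw [div_pow, div_pow, Real.sq_sqrt (by positivity : (0:ℝ) ≤ (d:ℝ))]
            ring
    calc Real.sqrt (∑ j, ‖(x - x₀) j‖ ^ 2) ≤ Real.sqrt ((Real.sqrt d / M) ^ 2) :=
          Real.sqrt_le_sqrt hsum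
      _ = Real.sqrt d / M := Real.sqrt_sq (by positivity)
  have hrpow : ‖x - x₀‖ ^ β ≤ (d:ℝ) ^ (β / 2) * (M:ℝ) ^ (-β) := by
    have h1 : ‖x - x₀‖ ^ β ≤ (Real.sqrt d / M) ^ β :=
      Real.rpow_le_rpow (norm_nonneg _) hnorm hβ0.le
    have h2 : (Real.sqrt d / M) ^ β = (d:ℝ) ^ (β / 2) * (M:ℝ) ^ (-β) := by
      rw [Real.div_rpow (Real.sqrt_nonneg _) hMpos.le, Real.sqrt_eq_rpow,
        ← Real.rpow_mul (Nat.cast_nonneg d), Real.rpow_neg hMpos.le, div_eq_mul_inv]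
      ring_nf
    rw [h2] at h1; exact h1
  -- main Hölder bound
  have hA : fstar x - f i x ≤ c₁ * (M:ℝ) ^ (-β) := by
    obtain ⟨j, hj⟩ := Finite.exists_max (fun j => f j x)
    have hstarx : fstar x = f j x := by
      rw [hfstar]
      exact le_antisymm (ciSup_le hj) (le_ciSup (hbdd x) j)
    have h1 : f j x - f j x₀ ≤ L * ‖x - x₀‖ ^ β :=
      le_of_abs_le (hholder j x hxU x₀ hx0U)
    have h2 : f i x₀ - f i x ≤ L * ‖x - x₀‖ ^ β := by
      have := le_of_abs_le (hholder i x₀ hx0U x hxU)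
      rwa [norm_sub_rev x₀ x] at this
    have h3 : f j x₀ ≤ f i x₀ := hopt ▸ hle j x₀
    have h4 : L * ‖x - x₀‖ ^ β ≤ L * ((d:ℝ) ^ (β / 2) * (M:ℝ) ^ (-β)) :=
      mul_le_mul_of_nonneg_left hrpow hL.le
    rw [hstarx, hc₁]
    nlinarith
  by_cases heq : f i x = fstar x
  · refine ⟨Or.inl heq, ?_⟩
    rw [heq, sub_self]
    apply mul_nonneg (mul_nonneg (by rw [hc₁]; positivity) hMneg.le)
    split_ifs <;> norm_num
  · have hlt : f i x < fstar x := lt_of_le_of_ne (hle i x) heq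
    have hcond : ∃ j, f j x < fstar x := ⟨i, hlt⟩
    have hsharp : fsharp x = sSup {v | ∃ j, v = f j x ∧ f j x < fstar x} := by
      rw [hfsharp x, if_pos hcond]
    set S : Set ℝ := {v | ∃ j, v = f j x ∧ f j x < fstar x} with hS
    have hSfin : S.Finite :=
      (Set.finite_range (fun j => f j x)).subset (by rintro v ⟨j, rfl, _⟩; exact ⟨j, rfl⟩)
    have hSne : S.Nonempty := ⟨f i x, i, rfl, hlt⟩
    have hmem : sSup S ∈ S := hSne.csSup_mem hSfin
    obtain ⟨k, hk, hklt⟩ := hmem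
    have hfi_le : f i x ≤ sSup S := le_csSup hSfin.bddAbove ⟨i, rfl, hlt⟩
    have hpos : 0 < fstar x - fsharp x := by rw [hsharp, hk]; linarith
    have hub : fstar x - fsharp x ≤ c₁ * (M:ℝ) ^ (-β) := by
      rw [hsharp]; linarith
    refine ⟨Or.inr ⟨by linarith, hA⟩, ?_⟩
    rw [if_pos ⟨hpos, hub⟩, mul_one]
    exact hA
end

section
/- Let $c > 1$, $p > 0$, $n \ge 1$, and $k_0 \ge 1$ an integer. Then $\sum_{k=0}^{k_0-1} c^{k}\,\overline{\log}(n c^{-k q}) \le C\big(c^{k_0}\,\overline{\log}(n c^{-k_0 q}) + \log n + 1\big)$ for a constant $C$ depending only on $c$ and $q$, where $q > 0$ and $\overline{\log}(y) = \max\{\log y, 1\}$. -/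
/-- For `c > 1` and `q > 0` there is a constant `C > 0` (depending only on `c` and `q`)
such that for all real `n ≥ 1` and integers `k₀ ≥ 1`:
`∑_{k=0}^{k₀-1} c^k blog(n c^{-kq}) ≤ C (c^{k₀} blog(n c^{-k₀ q}) + log n + 1)`,
where `blog y = max (log y) 1`. -/
theorem stmt_17 (c q : ℝ) (hc : 1 < c) (hq : 0 < q) :
    ∃ C > (0 : ℝ), ∀ (n : ℝ) (k₀ : ℕ), 1 ≤ n → 1 ≤ k₀ →
      ∑ k ∈ Finset.range k₀,
          c ^ k * max (Real.log (n * c ^ (-(k : ℝ) * q))) 1 ≤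
        C * (c ^ k₀ * max (Real.log (n * c ^ (-(k₀ : ℝ) * q))) 1 + Real.log n + 1) := by
  have hc0 : (0:ℝ) < c := lt_trans one_pos hc
  have hlogc : 0 < Real.log c := Real.log_pos hc
  set B := q * Real.log c with hBdef
  have hB0 : 0 < B := mul_pos hq hlogc
  set r := c⁻¹ with hrdef
  have hr0 : (0:ℝ) < r := inv_pos.mpr hc0
  have hr1 : r < 1 := inv_lt_one_of_one_lt₀ hc
  set g : ℕ → ℝ := fun j => r ^ j * (1 + (j:ℝ) * B) with hgdef
  have hgnn : ∀ j, 0 ≤ g j := by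
    intro j
    exact mul_nonneg (pow_nonneg hr0.le _)
      (by positivity)
  have hsum : Summable g := by
    have h1 : Summable (fun j : ℕ => r ^ j) :=
      summable_geometric_of_lt_one hr0.le hr1
    have h2 : Summable (fun j : ℕ => (j:ℝ) ^ 1 * r ^ j) := by
      apply summable_pow_mul_geometric_of_norm_lt_one
      rw [Real.norm_eq_abs, abs_of_pos hr0]; exact hr1
    have h2' : Summable (fun j : ℕ => (j:ℝ) * B * r ^ j) := by
      have := (h2.mul_right B)
      exact this.congr (fun j => by ring)
    have := h1.add h2'
    exact this.congr (fun j => by simp only [g]; ring)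
  set C0 := ∑' j, g j with hC0def
  have hC0pos : 0 < C0 := by
    have : 0 < g 0 := by simp [g]
    exact Summable.tsum_pos hsum hgnn 0 this
  refine ⟨C0, hC0pos, ?_⟩
  intro n k₀ hn hk₀
  have hn0 : (0:ℝ) < n := lt_of_lt_of_le one_pos hn
  have hlogn : 0 ≤ Real.log n := Real.log_nonneg hn
  have hlog : ∀ k : ℕ, Real.log (n * c ^ (-(k : ℝ) * q)) = Real.log n - (k:ℝ) * B := by
    intro k
    rw [Real.log_mul (ne_of_gt hn0) (ne_of_gt (Real.rpow_pos_of_pos hc0 _)),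
      Real.log_rpow hc0]
    ring
  set M := max (Real.log (n * c ^ (-(k₀ : ℝ) * q))) 1 with hMdef
  have hM1 : 1 ≤ M := le_max_right _ _
  -- per-term bound
  have hterm : ∀ k ∈ Finset.range k₀,
      c ^ k * max (Real.log (n * c ^ (-(k : ℝ) * q))) 1
        ≤ c ^ k * ((1 + ((k₀ - k : ℕ):ℝ) * B) * M) := by
    intro k hk
    have hkk : k ≤ k₀ := le_of_lt (Finset.mem_range.mp hk)
    have hcast : ((k₀ - k : ℕ):ℝ) = (k₀:ℝ) - (k:ℝ) := by
      rw [Nat.cast_sub hkk]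
    apply mul_le_mul_of_nonneg_left _ (pow_nonneg hc0.le k)
    rw [hlog k]
    have hlk₀ : Real.log n - (k₀:ℝ) * B ≤ M := by
      rw [hMdef, hlog k₀]; exact le_max_left _ _
    apply max_le
    · have h1 : Real.log n - (k:ℝ) * B
          = (Real.log n - (k₀:ℝ) * B) + ((k₀:ℝ) - (k:ℝ)) * B := by ring
      rw [h1, hcast]
      have h2 : ((k₀:ℝ) - (k:ℝ)) * B ≤ ((k₀:ℝ) - (k:ℝ)) * B * M := by
        have hnnb : 0 ≤ ((k₀:ℝ) - (k:ℝ)) * B := by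
          apply mul_nonneg _ hB0.le
          have : (k:ℝ) ≤ (k₀:ℝ) := by exact_mod_cast hkk
          linarith
        nlinarith
      nlinarith
    · have : 0 ≤ ((k₀:ℝ) - (k:ℝ)) * B := by
        apply mul_nonneg _ hB0.le
        have : (k:ℝ) ≤ (k₀:ℝ) := by exact_mod_cast hkk
        linarith
      rw [hcast]
      nlinarith
  have step1 := Finset.sum_le_sum hterm
  -- sum bound
  have hS : ∑ k ∈ Finset.range k₀, c ^ k * ((1 + ((k₀ - k : ℕ):ℝ) * B) * M)
      ≤ C0 * c ^ k₀ * M := by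
    have hrefl : ∑ k ∈ Finset.range k₀, c ^ k * ((1 + ((k₀ - k : ℕ):ℝ) * B) * M)
        = ∑ j ∈ Finset.range k₀, c ^ (k₀ - 1 - j) * ((1 + ((j + 1 : ℕ):ℝ) * B) * M) := by
      rw [← Finset.sum_range_reflect]
      apply Finset.sum_congr rfl
      intro j hj
      have hj' : j < k₀ := Finset.mem_range.mp hj
      have h1 : k₀ - 1 - j < k₀ := by omega
      have h2 : k₀ - (k₀ - 1 - j) = j + 1 := by omega
      rw [h2]
    rw [hrefl]
    have hbd : ∀ j ∈ Finset.range k₀,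
        c ^ (k₀ - 1 - j) * ((1 + ((j + 1 : ℕ):ℝ) * B) * M)
          ≤ (g (j + 1)) * (c ^ k₀ * M) := by
      intro j hj
      have hj' : j < k₀ := Finset.mem_range.mp hj
      have hpow : c ^ (k₀ - 1 - j) = c ^ k₀ * r ^ (j + 1) := by
        have h : (k₀ - 1 - j) + (j + 1) = k₀ := by omega
        rw [hrdef, inv_pow, eq_comm, mul_inv_eq_iff_eq_mul₀ (pow_ne_zero _ (ne_of_gt hc0)),
          ← pow_add, h]
      rw [hpow]
      have : c ^ k₀ * r ^ (j + 1) * ((1 + ((j + 1 : ℕ):ℝ) * B) * M)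
          = g (j + 1) * (c ^ k₀ * M) := by
        simp only [g]; push_cast; ring
      rw [this]
    calc ∑ j ∈ Finset.range k₀, c ^ (k₀ - 1 - j) * ((1 + ((j + 1 : ℕ):ℝ) * B) * M)
        ≤ ∑ j ∈ Finset.range k₀, g (j + 1) * (c ^ k₀ * M) :=
          Finset.sum_le_sum hbd
      _ = (∑ j ∈ Finset.range k₀, g (j + 1)) * (c ^ k₀ * M) := by
          rw [Finset.sum_mul]
      _ ≤ C0 * (c ^ k₀ * M) := by
          apply mul_le_mul_of_nonneg_right _ (by positivity)
          have h1 : ∑ j ∈ Finset.range k₀, g (j + 1)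
              ≤ ∑ j ∈ Finset.range (k₀ + 1), g j := by
            rw [Finset.sum_range_succ']
            have := hgnn 0
            linarith
          exact h1.trans (Summable.sum_le_tsum _ (fun i _ => hgnn i) hsum)
      _ = C0 * c ^ k₀ * M := by ring
  have final : C0 * c ^ k₀ * M ≤ C0 * (c ^ k₀ * M + Real.log n + 1) := by
    nlinarith
  calc ∑ k ∈ Finset.range k₀, c ^ k * max (Real.log (n * c ^ (-(k : ℝ) * q))) 1
      ≤ ∑ k ∈ Finset.range k₀, c ^ k * ((1 + ((k₀ - k : ℕ):ℝ) * B) * M) := step1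
    _ ≤ C0 * c ^ k₀ * M := hS
    _ ≤ C0 * (c ^ k₀ * M + Real.log n + 1) := final
end
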